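/- The subset A = { [[1,0,0],[0,1,0],[c,d,1]] : c,d ∈ ℤ/5 } is an abelian normal subgroup of Ĝ₅ of order 25 and index 12. -/
import Mathlib

open Matrix

/-- The group `Ĝ₅ = SO(3)₅ mod 5` (with `v = -2`, so `-v = 2`). -/
abbrev Ghat5 : Type :=
  {L : Matrix (Fin 3) (Fin 3) (ZMod 5) //
    Lᵀ * Matrix.diagonal ![1, 2, 0] * L = Matrix.diagonal ![1, 2, 0] ∧ L.det = 1}

namespace Ghat5aux

local notation "Q" => Matrix.diagonal (![1, 2, 0] : Fin 3 → ZMod 5)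

instance instGroup : Group Ghat5 where
  mul x y := ⟨x.val * y.val, by
    obtain ⟨hx1, hx2⟩ := x.prop
    obtain ⟨hy1, hy2⟩ := y.prop
    refine ⟨?_, by simp [det_mul, hx2, hy2]⟩
    calc (x.val * y.val)ᵀ * Q * (x.val * y.val)
        = y.valᵀ * (x.valᵀ * Q * x.val) * y.val := by
          simp only [transpose_mul]; noncomm_ring
      _ = Q := by rw [hx1]; exact hy1⟩
  one := ⟨1, by simp⟩
  inv x := ⟨x.val.adjugate, by
    obtain ⟨hx1, hx2⟩ := x.prop
    have hAB : x.val * x.val.adjugate = 1 := by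
      rw [mul_adjugate, hx2, one_smul]
    refine ⟨?_, by simp [det_adjugate, hx2]⟩
    calc x.val.adjugateᵀ * Q * x.val.adjugate
        = x.val.adjugateᵀ * (x.valᵀ * Q * x.val) * x.val.adjugate := by rw [hx1]
      _ = (x.val * x.val.adjugate)ᵀ * Q * (x.val * x.val.adjugate) := by
          simp only [transpose_mul]; noncomm_ring
      _ = Q := by rw [hAB]; simp⟩
  mul_assoc a b c := Subtype.ext (mul_assoc _ _ _)
  one_mul a := Subtype.ext (one_mul _)
  mul_one a := Subtype.ext (mul_one _)
  inv_mul_cancel a := Subtype.ext (by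
    show a.val.adjugate * a.val = 1
    rw [adjugate_mul, a.prop.2, one_smul])

lemma mul_val (x y : Ghat5) : (x * y).val = x.val * y.val := rfl
lemma one_val : (1 : Ghat5).val = 1 := rfl
lemma inv_val (x : Ghat5) : (x⁻¹).val = x.val.adjugate := rfl

def E (c d : ZMod 5) : Matrix (Fin 3) (Fin 3) (ZMod 5) := !![0,0,0;0,0,0;c,d,0]
def Mm (c d : ZMod 5) : Matrix (Fin 3) (Fin 3) (ZMod 5) := !![1,0,0;0,1,0;c,d,1]

lemma Mm_eq (c d : ZMod 5) : Mm c d = 1 + E c d := by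
  ext i j; fin_cases i <;> fin_cases j <;>
    simp [Mm, E, one_apply, Matrix.vecHead, Matrix.vecTail]

lemma E_mul_E (c d c' d' : ZMod 5) : E c d * E c' d' = 0 := by
  ext i j; fin_cases i <;> fin_cases j <;>
    simp [E, mul_apply, Fin.sum_univ_three, Matrix.vecHead, Matrix.vecTail]

lemma E_add_E (c d c' d' : ZMod 5) : E c d + E c' d' = E (c+c') (d+d') := by
  ext i j; fin_cases i <;> fin_cases j <;>
    simp [E, Matrix.vecHead, Matrix.vecTail]

lemma key25 : ∀ a b : ZMod 5, a * a + b * 2 * b = 0 → a = 0 ∧ b = 0 := by decide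

lemma Mm_mul (c d c' d' : ZMod 5) : Mm c d * Mm c' d' = Mm (c+c') (d+d') := by
  rw [Mm_eq, Mm_eq, Mm_eq, add_mul, one_mul, mul_add, mul_one, E_mul_E, add_zero,
    add_assoc, E_add_E, add_comm c' c, add_comm d' d]

lemma Mm_zero : Mm 0 0 = 1 := by
  ext i j; fin_cases i <;> fin_cases j <;>
    simp [Mm, one_apply, Matrix.vecHead, Matrix.vecTail]

lemma Mm_mem (c d : ZMod 5) :
    (Mm c d)ᵀ * Q * Mm c d = Q ∧ (Mm c d).det = 1 := by
  constructor
  · ext i j; fin_cases i <;> fin_cases j <;>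
      simp [Mm, mul_apply, Fin.sum_univ_three, Matrix.diagonal, Matrix.transpose_apply,
        Matrix.vecHead, Matrix.vecTail]
  · simp [Mm, det_fin_three]

lemma entries_zero (L : Matrix (Fin 3) (Fin 3) (ZMod 5))
    (h : Lᵀ * Q * L = Q) : L 0 2 = 0 ∧ L 1 2 = 0 := by
  have h22 := congr_fun (congr_fun h 2) 2
  simp [mul_apply, Fin.sum_univ_three, Matrix.diagonal] at h22
  exact key25 _ _ (by linear_combination h22)

lemma g_mul_E (g : Matrix (Fin 3) (Fin 3) (ZMod 5)) (h0 : g 0 2 = 0) (h1 : g 1 2 = 0)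
    (c d : ZMod 5) : g * E c d = E (g 2 2 * c) (g 2 2 * d) := by
  ext i j; fin_cases i <;> fin_cases j <;>
    simp [E, mul_apply, Fin.sum_univ_three, h0, h1, Matrix.vecHead, Matrix.vecTail]

lemma E_mul_g (g : Matrix (Fin 3) (Fin 3) (ZMod 5)) (h0 : g 0 2 = 0) (h1 : g 1 2 = 0)
    (c d : ZMod 5) : E c d * g = E (c * g 0 0 + d * g 1 0) (c * g 0 1 + d * g 1 1) := by
  ext i j; fin_cases i <;> fin_cases j <;>
    simp [E, mul_apply, Fin.sum_univ_three, h0, h1, Matrix.vecHead, Matrix.vecTail]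

def H : Subgroup Ghat5 where
  carrier := {L | ∃ c d : ZMod 5, L.val = Mm c d}
  mul_mem' := by
    rintro x y ⟨c, d, hx⟩ ⟨c', d', hy⟩
    exact ⟨c + c', d + d', by rw [mul_val, hx, hy, Mm_mul]⟩
  one_mem' := ⟨0, 0, by rw [one_val, Mm_zero]⟩
  inv_mem' := by
    rintro x ⟨c, d, hx⟩
    refine ⟨-c, -d, ?_⟩
    rw [inv_val, hx]
    have h1 : Mm c d * Mm (-c) (-d) = 1 := by
      rw [Mm_mul]; simp [Mm_zero]
    calc (Mm c d).adjugate = (Mm c d).adjugate * (Mm c d * Mm (-c) (-d)) := by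
          rw [h1, mul_one]
      _ = ((Mm c d).adjugate * Mm c d) * Mm (-c) (-d) := by rw [mul_assoc]
      _ = Mm (-c) (-d) := by rw [adjugate_mul, (Mm_mem c d).2, one_smul, one_mul]

lemma H_normal : H.Normal := by
  constructor
  intro n hn g
  obtain ⟨c, d, hc⟩ := hn
  obtain ⟨h0, h1⟩ := entries_zero g.val g.prop.1
  obtain ⟨h0', h1'⟩ := entries_zero (g⁻¹).val (g⁻¹).prop.1
  have hgi : g.val * (g⁻¹).val = 1 := by
    rw [← mul_val, mul_inv_cancel, one_val]
  refine ⟨g.val 2 2 * c * (g⁻¹).val 0 0 + g.val 2 2 * d * (g⁻¹).val 1 0,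
          g.val 2 2 * c * (g⁻¹).val 0 1 + g.val 2 2 * d * (g⁻¹).val 1 1, ?_⟩
  rw [mul_val, mul_val, hc, Mm_eq, mul_add, mul_one, add_mul, hgi,
    g_mul_E g.val h0 h1, E_mul_g _ h0' h1', ← Mm_eq]

lemma card_H : Nat.card H = 25 := by
  have hf : Function.Bijective
      (fun p : ZMod 5 × ZMod 5 => (⟨⟨Mm p.1 p.2, Mm_mem p.1 p.2⟩, ⟨p.1, p.2, rfl⟩⟩ : H)) := by
    constructor
    · rintro ⟨c, d⟩ ⟨c', d'⟩ hp
      have hv : Mm c d = Mm c' d' := congrArg (fun z : H => (z : Ghat5).val) hp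
      have hcc := congr_fun (congr_fun hv 2) 0
      have hdd := congr_fun (congr_fun hv 2) 1
      simp [Mm, Matrix.vecHead, Matrix.vecTail] at hcc hdd
      simp [Prod.ext_iff, hcc, hdd]
    · rintro ⟨x, c, d, hx⟩
      exact ⟨(c, d), Subtype.ext (Subtype.ext hx.symm)⟩
  rw [← Nat.card_eq_of_bijective _ hf]
  simp [Nat.card_eq_fintype_card]

abbrev T : Type := {t : (ZMod 5 × ZMod 5) × (ZMod 5 × ZMod 5) //
  t.1.1 * t.1.1 + 2 * (t.2.1 * t.2.1) = 1 ∧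
  t.1.2 * t.1.2 + 2 * (t.2.2 * t.2.2) = 2 ∧
  t.1.1 * t.1.2 + 2 * (t.2.1 * t.2.2) = 0}

lemma card_T : Nat.card T = 12 := by
  rw [Nat.card_eq_fintype_card]; decide

def bigMap (p : (ZMod 5 × ZMod 5) × T) : Ghat5 :=
  ⟨!![p.2.val.1.1, p.2.val.1.2, 0; p.2.val.2.1, p.2.val.2.2, 0;
      p.1.1, p.1.2, p.2.val.1.1 * p.2.val.2.2 - p.2.val.1.2 * p.2.val.2.1], by
    obtain ⟨⟨e, f⟩, ⟨⟨⟨a, b⟩, ⟨c, d⟩⟩, h1, h2, h3⟩⟩ := p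
    have h5 : (5 : ZMod 5) = 0 := rfl
    have ht : (a * d - b * c) ^ 2 = 1 := by
      linear_combination (3 * (b * b + 2 * (d * d))) * h1 + 3 * h2
        - (3 * (a * b + 2 * (c * d))) * h3
        + (1 + 2 * (a * d) * (b * c) - a ^ 2 * d ^ 2 - b ^ 2 * c ^ 2) * h5
    constructor
    · ext i j
      fin_cases i <;> fin_cases j <;>
        simp [mul_apply, Fin.sum_univ_three, Matrix.diagonal, Matrix.transpose_apply,
          Matrix.vecHead, Matrix.vecTail] <;>
        first
          | linear_combination h1
          | linear_combination h2
          | linear_combination h3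
    · simp [det_fin_three, Matrix.vecHead, Matrix.vecTail]
      linear_combination ht⟩

lemma big_bij : Function.Bijective bigMap := by
  constructor
  · rintro ⟨⟨e, f⟩, ⟨⟨⟨a, b⟩, ⟨c, d⟩⟩, ht⟩⟩ ⟨⟨e', f'⟩, ⟨⟨⟨a', b'⟩, ⟨c', d'⟩⟩, ht'⟩⟩ hpq
    have hv := congrArg Subtype.val hpq
    simp only [bigMap] at hv
    have h00 := congr_fun (congr_fun hv 0) 0
    have h01 := congr_fun (congr_fun hv 0) 1
    have h10 := congr_fun (congr_fun hv 1) 0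
    have h11 := congr_fun (congr_fun hv 1) 1
    have h20 := congr_fun (congr_fun hv 2) 0
    have h21 := congr_fun (congr_fun hv 2) 1
    simp [Matrix.vecHead, Matrix.vecTail] at h00 h01 h10 h11 h20 h21
    subst h00; subst h01; subst h10; subst h11; subst h20; subst h21
    rfl
  · rintro ⟨L, hQ, hdet⟩
    obtain ⟨h02, h12⟩ := entries_zero L hQ
    have h00 := congr_fun (congr_fun hQ 0) 0
    have h11 := congr_fun (congr_fun hQ 1) 1
    have h01 := congr_fun (congr_fun hQ 0) 1
    simp [mul_apply, Fin.sum_univ_three, Matrix.diagonal] at h00 h11 h01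
    refine ⟨⟨(L 2 0, L 2 1), ⟨((L 0 0, L 0 1), (L 1 0, L 1 1)), ?_, ?_, ?_⟩⟩, ?_⟩
    · linear_combination h00
    · linear_combination h11
    · linear_combination h01
    · apply Subtype.ext
      have h5 : (5 : ZMod 5) = 0 := rfl
      have ht : (L 0 0 * L 1 1 - L 0 1 * L 1 0) ^ 2 = 1 := by
        linear_combination (3 * (L 0 1 * L 0 1 + 2 * (L 1 1 * L 1 1))) * h00 + 3 * h11
          - (3 * (L 0 0 * L 0 1 + 2 * (L 1 0 * L 1 1))) * h01
          + (1 + 2 * (L 0 0 * L 1 1) * (L 0 1 * L 1 0)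
            - (L 0 0) ^ 2 * (L 1 1) ^ 2 - (L 0 1) ^ 2 * (L 1 0) ^ 2) * h5
      rw [det_fin_three, h02, h12] at hdet
      have hd : L 2 2 = L 0 0 * L 1 1 - L 0 1 * L 1 0 := by
        linear_combination (L 0 0 * L 1 1 - L 0 1 * L 1 0) * hdet - L 2 2 * ht
      show (!![L 0 0, L 0 1, 0; L 1 0, L 1 1, 0;
        L 2 0, L 2 1, L 0 0 * L 1 1 - L 0 1 * L 1 0] : Matrix (Fin 3) (Fin 3) (ZMod 5)) = L
      ext i j
      fin_cases i <;> fin_cases j <;>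
        simp [Matrix.vecHead, Matrix.vecTail, h02, h12, ← hd]

lemma card_G : Nat.card Ghat5 = 300 := by
  rw [← Nat.card_eq_of_bijective _ big_bij, Nat.card_prod, card_T]
  simp [Nat.card_eq_fintype_card]

lemma index_H : H.index = 12 := by
  have h := Subgroup.card_mul_index H
  rw [card_H, card_G] at h
  omega

end Ghat5aux

theorem Ghat5_abelian_normal_subgroup :
    ∃ _ : Group Ghat5,
      (∀ x y : Ghat5, (x * y).val = x.val * y.val) ∧
      ∃ H : Subgroup Ghat5,
        (∀ L : Ghat5, L ∈ H ↔ ∃ c d : ZMod 5, L.val = !![1, 0, 0; 0, 1, 0; c, d, 1]) ∧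
        (∀ x ∈ H, ∀ y ∈ H, x * y = y * x) ∧
        H.Normal ∧
        Nat.card H = 25 ∧
        H.index = 12 := by
  refine ⟨Ghat5aux.instGroup, Ghat5aux.mul_val, Ghat5aux.H, fun L => Iff.rfl, ?_,
    Ghat5aux.H_normal, Ghat5aux.card_H, Ghat5aux.index_H⟩
  rintro x ⟨c, d, hx⟩ y ⟨c', d', hy⟩
  apply Subtype.ext
  rw [Ghat5aux.mul_val, Ghat5aux.mul_val, hx, hy, Ghat5aux.Mm_mul, Ghat5aux.Mm_mul,
    add_comm c c', add_comm d d']
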